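/- arXiv:0805.3373 — 6 statements merged into one kernel-verified Lean document; each statement's English description precedes it below -/
import Mathlib

section
/- Let b : ℝ⁴ × ℝ⁴ → ℂ be a measurable function with |b(x,y)| ≤ M for all x, y, and define the kernel G(x,y) = b(x,y)/‖x-y‖². Let f : ℝ⁴ → ℂ be a measurable function satisfying |f(x)| ≤ C/(1+‖x‖⁴) for all x, for some constant C > 0. Then the function F(x) := ∫_{ℝ⁴} G(x,y) f(y) dy is well defined for all x and there exists a constant K > 0 such that |F(x)| ≤ K · log(2+‖x‖)/‖x‖² for all x with ‖x‖ ≥ 1. In particular, F(x) = O(‖x‖^{-2+ε}) as ‖x‖ → ∞ for every ε > 0. -/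
/-!
In dimension `n = 4` the integrand is bounded by `M C · greenMajorant x y`, where
`greenMajorant x y = ‖x - y‖^(2-n) (1 + ‖y‖^n)⁻¹`. For `‖x‖ ≥ 1`, split space into three regions.
On the ball `‖y - x‖ < ‖x‖/2` the weight is at most `(‖x‖/2)^(-n)` and the kernel integrates
to `≍ ‖x‖²`. On the rest of the ball `‖y‖ < 2‖x‖` the kernel is at most `(‖x‖/2)^(2-n)` and
the weight integrates to `vol(B₁) log(1 + (2‖x‖)^n)`: this is where the logarithm comes from.
Outside that ball `‖x - y‖ ≥ ‖y‖/2`, so the integrand is `≲ ‖y‖^(2-2n)`, whose tail integral is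
`≍ ‖x‖^(2-n)`. Every integral is evaluated exactly in polar coordinates.
-/

open MeasureTheory Real Set Metric

local notation "dim" => Module.finrank ℝ

theorem div_two_rpow {r : ℝ} (hr : 0 ≤ r) (c : ℝ) : (r / 2) ^ c = 2 ^ (-c) * r ^ c := by
  rw [div_rpow hr zero_le_two, div_eq_mul_inv, ← rpow_neg zero_le_two, mul_comm]

theorem inv_one_add_pow_le_one {s : ℝ} (hs : 0 ≤ s) (n : ℕ) : (1 + s ^ n)⁻¹ ≤ 1 :=
  inv_le_one_of_one_le₀ (le_add_of_nonneg_right (pow_nonneg hs n))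

theorem inv_one_add_pow_le_rpow_neg {s t : ℝ} (ht : 0 < t) (hts : t ≤ s) (n : ℕ) :
    (1 + s ^ n)⁻¹ ≤ t ^ (-(n : ℝ)) := by
  rw [rpow_neg ht.le, rpow_natCast]
  exact inv_anti₀ (pow_pos ht n)
    ((pow_le_pow_left₀ ht.le hts n).trans (le_add_of_nonneg_left zero_le_one))

theorem log_one_add_two_mul_pow_le {r : ℝ} (hr : 0 ≤ r) {n : ℕ} (hn : n ≠ 0) :
    log (1 + (2 * r) ^ n) ≤ 2 * n * log (2 + r) := by
  have hsq : 1 + 2 * r ≤ (2 + r) ^ 2 := by nlinarith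
  rw [show 2 * (n : ℝ) * log (2 + r) = log (((2 + r) ^ 2) ^ n) by rw [log_pow, log_pow]; ring]
  refine log_le_log (by positivity) ?_
  calc 1 + (2 * r) ^ n = 1 ^ n + (2 * r) ^ n := by rw [one_pow]
    _ ≤ (1 + 2 * r) ^ n := pow_add_pow_le zero_le_one (by positivity) hn
    _ ≤ ((2 + r) ^ 2) ^ n := pow_le_pow_left₀ (by positivity) hsq n

theorem log_two_add_div_sq_le {r ε : ℝ} (hr : 1 ≤ r) (hε : 0 < ε) :
    log (2 + r) / r ^ 2 ≤ 3 ^ ε / ε * r ^ (-2 + ε) := by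
  have hr0 : 0 < r := one_pos.trans_le hr
  have hlog : log (2 + r) ≤ 3 ^ ε / ε * r ^ ε :=
    calc log (2 + r) ≤ (2 + r) ^ ε / ε := log_le_rpow_div (by positivity) hε
      _ ≤ (3 * r) ^ ε / ε := by gcongr; linarith
      _ = 3 ^ ε / ε * r ^ ε := by rw [mul_rpow zero_le_three hr0.le]; ring
  calc log (2 + r) / r ^ 2 ≤ 3 ^ ε / ε * r ^ ε / r ^ 2 := by gcongr
    _ = 3 ^ ε / ε * r ^ (-2 + ε) := by rw [rpow_add hr0, rpow_neg hr0.le, rpow_two]; ring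

theorem continuousOn_pow_mul_inv_one_add_pow (n : ℕ) :
    ContinuousOn (fun y : ℝ => y ^ (n - 1) * (1 + y ^ n)⁻¹) (Ici 0) :=
  (continuous_pow _).continuousOn.mul <|
    (continuous_const.add (continuous_pow _)).continuousOn.inv₀
      fun y (hy : 0 ≤ y) => (by positivity : (0 : ℝ) < 1 + y ^ n).ne'

theorem integral_le_setIntegral_add_inter_add_compl {α : Type*} [MeasurableSpace α]
    {μ : Measure α} {g : α → ℝ} (hg : Integrable g μ) (hg0 : 0 ≤ g) {s t : Set α}
    (hs : MeasurableSet s) (ht : MeasurableSet t) :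
    ∫ a, g a ∂μ ≤ ∫ a in s, g a ∂μ + (∫ a in sᶜ ∩ t, g a ∂μ + ∫ a in tᶜ, g a ∂μ) :=
  calc ∫ a, g a ∂μ = ∫ a in s, g a ∂μ + (∫ a in sᶜ ∩ t, g a ∂μ + ∫ a in sᶜ \ t, g a ∂μ) := by
        rw [integral_inter_add_sdiff ht hg.integrableOn, integral_add_compl hs hg]
    _ ≤ ∫ a in s, g a ∂μ + (∫ a in sᶜ ∩ t, g a ∂μ + ∫ a in tᶜ, g a ∂μ) :=
        add_le_add le_rfl <| add_le_add le_rfl <| setIntegral_mono_set hg.integrableOn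
          (.of_forall hg0) (sdiff_subset_compl _ _).eventuallyLE

section Balls

variable {E : Type*} [NormedAddCommGroup E]

theorem ball_zero_eq_preimage_norm (r : ℝ) : ball (0 : E) r = (‖·‖) ⁻¹' Iio r := by
  ext; simp

theorem compl_ball_zero_eq_preimage_norm (r : ℝ) : (ball (0 : E) r)ᶜ = (‖·‖) ⁻¹' Ici r := by
  ext; simp

theorem le_norm_sub_of_mem_compl_ball {x y : E} {ρ : ℝ} (hy : y ∈ (ball x ρ)ᶜ) :
    ρ ≤ ‖x - y‖ := by
  rw [← dist_eq_norm]
  exact not_lt.1 fun h => hy (mem_ball'.2 h)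

theorem indicator_ball_comp_sub (g : E → ℝ) (x : E) (r : ℝ) :
    (ball x r).indicator (fun y => g (y - x)) = fun y => (ball 0 r).indicator g (y - x) := by
  ext y
  simp only [indicator, mem_ball, dist_eq_norm, sub_zero]

variable [MeasurableSpace E] [BorelSpace E] (μ : Measure E) [μ.IsAddRightInvariant]

theorem IntegrableOn.comp_sub_ball {g : E → ℝ} {r : ℝ} (hg : IntegrableOn g (ball 0 r) μ)
    (x : E) : IntegrableOn (fun y => g (y - x)) (ball x r) μ := by
  rw [← integrable_indicator_iff measurableSet_ball, indicator_ball_comp_sub]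
  exact ((integrable_indicator_iff measurableSet_ball).2 hg).comp_sub_right x

theorem setIntegral_ball_comp_sub (g : E → ℝ) (x : E) (r : ℝ) :
    ∫ y in ball x r, g (y - x) ∂μ = ∫ z in ball 0 r, g z ∂μ := by
  rw [← integral_indicator measurableSet_ball, indicator_ball_comp_sub,
    integral_sub_right_eq_self, integral_indicator measurableSet_ball]

end Balls

section Radial

variable {E : Type*} [NormedAddCommGroup E] [NormedSpace ℝ E] [FiniteDimensional ℝ E]
  [MeasurableSpace E] [BorelSpace E] [Nontrivial E] (μ : Measure E) [μ.IsAddHaarMeasure]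

theorem setIntegral_preimage_norm {s : Set ℝ} (hs : MeasurableSet s) (f : ℝ → ℝ) :
    ∫ x in (‖·‖) ⁻¹' s, f ‖x‖ ∂μ =
      dim E * μ.real (ball 0 1) * ∫ y in Ioi 0 ∩ s, y ^ (dim E - 1) * f y := by
  rw [← integral_indicator (measurableSet_preimage measurable_norm hs),
    show (((‖·‖) ⁻¹' s).indicator fun x : E => f ‖x‖) = fun x => s.indicator f ‖x‖ from rfl,
    integral_fun_norm_addHaar, ← setIntegral_indicator hs]
  simp only [nsmul_eq_mul, smul_eq_mul, mul_assoc]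
  congr 3 with y
  by_cases hy : y ∈ s <;> simp [hy]

theorem integrableOn_preimage_norm_iff {s : Set ℝ} (hs : MeasurableSet s) {f : ℝ → ℝ} :
    IntegrableOn (fun x => f ‖x‖) ((‖·‖) ⁻¹' s) μ ↔
      IntegrableOn (fun y => y ^ (dim E - 1) * f y) (Ioi 0 ∩ s) := by
  rw [← integrable_indicator_iff (measurableSet_preimage measurable_norm hs),
    show (((‖·‖) ⁻¹' s).indicator fun x : E => f ‖x‖) = fun x => s.indicator f ‖x‖ from rfl,
    integrable_fun_norm_addHaar, IntegrableOn, IntegrableOn, inter_comm,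
    ← Measure.restrict_restrict hs]
  change _ ↔ IntegrableOn _ s _
  rw [← integrable_indicator_iff hs]
  simp only [smul_eq_mul]
  congr! 2 with y
  by_cases hy : y ∈ s <;> simp [hy]

theorem integrableOn_ball_norm_rpow {a : ℝ} (ha : -(dim E : ℝ) < a) (r : ℝ) :
    IntegrableOn (fun x : E => ‖x‖ ^ a) (ball 0 r) μ :=
  integrableOn_ball_of_norm_le_rpow Module.finrank_pos (α := -a) (C := 1) (by linarith)
    (.of_forall fun x => by simp [abs_of_nonneg (rpow_nonneg (norm_nonneg x) a)])
    (measurable_norm.pow_const a).aestronglyMeasurable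

theorem integral_ball_norm_rpow {a : ℝ} (ha : -(dim E : ℝ) < a) {r : ℝ} (hr : 0 ≤ r) :
    ∫ x in ball 0 r, ‖x‖ ^ a ∂μ =
      dim E * μ.real (ball 0 1) * (r ^ (dim E + a) / (dim E + a)) := by
  have hd : 1 ≤ dim E := Module.finrank_pos
  rw [ball_zero_eq_preimage_norm, setIntegral_preimage_norm μ measurableSet_Iio (· ^ a),
    Ioi_inter_Iio, setIntegral_congr_fun measurableSet_Ioo (g := fun y => y ^ (dim E - 1 + a))
      fun y hy => by rw [← rpow_natCast, ← rpow_add hy.1, Nat.cast_sub hd, Nat.cast_one],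
    ← integral_Ioc_eq_integral_Ioo, ← intervalIntegral.integral_of_le hr,
    integral_rpow (Or.inl (by linarith)), zero_rpow (by linarith)]
  ring_nf

theorem integrableOn_compl_ball_norm_rpow {a : ℝ} (ha : a < -(dim E : ℝ)) {r : ℝ} (hr : 0 < r) :
    IntegrableOn (fun x => ‖x‖ ^ a) (ball (0 : E) r)ᶜ μ := by
  have hd : 1 ≤ dim E := Module.finrank_pos
  rw [compl_ball_zero_eq_preimage_norm,
    integrableOn_preimage_norm_iff μ measurableSet_Ici (f := (· ^ a)),
    inter_eq_right.2 (Ici_subset_Ioi.2 hr), integrableOn_Ici_iff_integrableOn_Ioi]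
  refine (integrableOn_Ioi_rpow_of_lt (a := dim E - 1 + a) (by linarith) hr).congr_fun
    (fun y hy => ?_) measurableSet_Ioi
  rw [← rpow_natCast, ← rpow_add (hr.trans hy), Nat.cast_sub hd, Nat.cast_one]

theorem integral_compl_ball_norm_rpow {a : ℝ} (ha : a < -(dim E : ℝ)) {r : ℝ} (hr : 0 < r) :
    ∫ x in (ball 0 r)ᶜ, ‖x‖ ^ a ∂μ =
      dim E * μ.real (ball 0 1) * (r ^ (dim E + a) / -(dim E + a)) := by
  have hd : 1 ≤ dim E := Module.finrank_pos
  rw [compl_ball_zero_eq_preimage_norm, setIntegral_preimage_norm μ measurableSet_Ici (· ^ a),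
    inter_eq_right.2 (Ici_subset_Ioi.2 hr), integral_Ici_eq_integral_Ioi,
    setIntegral_congr_fun measurableSet_Ioi (g := fun y => y ^ (dim E - 1 + a))
      fun y hy => by rw [← rpow_natCast, ← rpow_add (hr.trans hy), Nat.cast_sub hd, Nat.cast_one],
    integral_Ioi_rpow_of_lt (by linarith) hr, div_neg, neg_div]
  ring_nf

theorem integrableOn_ball_inv_one_add_norm_pow (R : ℝ) :
    IntegrableOn (fun x : E => (1 + ‖x‖ ^ dim E)⁻¹) (ball 0 R) μ := by
  rw [ball_zero_eq_preimage_norm,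
    integrableOn_preimage_norm_iff μ measurableSet_Iio (f := fun y => (1 + y ^ dim E)⁻¹),
    Ioi_inter_Iio]
  exact ((continuousOn_pow_mul_inv_one_add_pow _).mono Icc_subset_Ici_self).integrableOn_Icc
    |>.mono_set Ioo_subset_Icc_self

theorem integral_ball_inv_one_add_norm_pow {R : ℝ} (hR : 0 ≤ R) :
    ∫ x in ball 0 R, (1 + ‖x‖ ^ dim E)⁻¹ ∂μ = μ.real (ball 0 1) * log (1 + R ^ dim E) := by
  have hd : (dim E : ℝ) ≠ 0 := Nat.cast_ne_zero.2 Module.finrank_pos.ne'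
  have hIcc : uIcc 0 R ⊆ Ici 0 := by rw [uIcc_of_le hR]; exact Icc_subset_Ici_self
  have hderiv : ∀ y ∈ uIcc 0 R, HasDerivAt (fun u : ℝ => log (1 + u ^ dim E) / dim E)
      (y ^ (dim E - 1) * (1 + y ^ dim E)⁻¹) y := by
    intro y hy
    have hy : 0 ≤ y := hIcc hy
    refine ((((hasDerivAt_pow (dim E) y).const_add 1).log (by positivity)).div_const
      (dim E : ℝ)).congr_deriv ?_
    field_simp
  rw [ball_zero_eq_preimage_norm,
    setIntegral_preimage_norm μ measurableSet_Iio (fun y => (1 + y ^ dim E)⁻¹), Ioi_inter_Iio,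
    ← integral_Ioc_eq_integral_Ioo, ← intervalIntegral.integral_of_le hR,
    intervalIntegral.integral_eq_sub_of_hasDerivAt hderiv
      ((continuousOn_pow_mul_inv_one_add_pow _).mono hIcc).intervalIntegrable]
  field_simp
  simp [Module.finrank_pos.ne']

theorem integrableOn_ball_norm_sub_rpow {a : ℝ} (ha : -(dim E : ℝ) < a) (x : E) (ρ : ℝ) :
    IntegrableOn (fun y => ‖x - y‖ ^ a) (ball x ρ) μ := by
  simp_rw [norm_sub_rev x]
  exact IntegrableOn.comp_sub_ball μ (integrableOn_ball_norm_rpow μ ha ρ) x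

theorem integral_ball_norm_sub_rpow {a : ℝ} (ha : -(dim E : ℝ) < a) (x : E) {ρ : ℝ}
    (hρ : 0 ≤ ρ) :
    ∫ y in ball x ρ, ‖x - y‖ ^ a ∂μ =
      dim E * μ.real (ball 0 1) * (ρ ^ (dim E + a) / (dim E + a)) := by
  simp_rw [norm_sub_rev x]
  rw [setIntegral_ball_comp_sub μ (‖·‖ ^ a), integral_ball_norm_rpow μ ha hρ]

end Radial

section Majorant

variable {E : Type*} [NormedAddCommGroup E] [NormedSpace ℝ E]

noncomputable def greenMajorant (x y : E) : ℝ :=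
  ‖x - y‖ ^ (2 - dim E : ℝ) * (1 + ‖y‖ ^ dim E)⁻¹

theorem greenMajorant_nonneg (x y : E) : 0 ≤ greenMajorant x y := by
  unfold greenMajorant; positivity

theorem measurable_greenMajorant [MeasurableSpace E] [BorelSpace E] (x : E) :
    Measurable (greenMajorant x) := by
  unfold greenMajorant; fun_prop

theorem greenMajorant_le (x y : E) : greenMajorant x y ≤ ‖x - y‖ ^ (2 - dim E : ℝ) :=
  mul_le_of_le_one_right (by positivity) (inv_one_add_pow_le_one (norm_nonneg y) _)

theorem greenMajorant_le_of_le_norm {x y : E} {t : ℝ} (ht : 0 < t) (hty : t ≤ ‖y‖) :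
    greenMajorant x y ≤ t ^ (-(dim E : ℝ)) * ‖x - y‖ ^ (2 - dim E : ℝ) := by
  rw [greenMajorant, mul_comm]
  exact mul_le_mul_of_nonneg_right (inv_one_add_pow_le_rpow_neg ht hty _) (by positivity)

theorem greenMajorant_le_of_le_norm_sub (hE : 2 ≤ dim E) {x y : E} {t : ℝ} (ht : 0 < t)
    (htxy : t ≤ ‖x - y‖) :
    greenMajorant x y ≤ t ^ (2 - dim E : ℝ) * (1 + ‖y‖ ^ dim E)⁻¹ := by
  have : (2 : ℝ) - dim E ≤ 0 := by rw [sub_nonpos]; exact_mod_cast hE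
  exact mul_le_mul_of_nonneg_right (rpow_le_rpow_of_nonpos ht htxy this) (by positivity)

theorem greenMajorant_le_of_two_mul_norm_le (hE : 2 ≤ dim E) {x y : E} (hy : y ≠ 0)
    (hxy : 2 * ‖x‖ ≤ ‖y‖) :
    greenMajorant x y ≤ 2 ^ (dim E - 2 : ℝ) * ‖y‖ ^ (2 - 2 * dim E : ℝ) := by
  have hy : 0 < ‖y‖ := norm_pos_iff.2 hy
  have hhalf : ‖y‖ / 2 ≤ ‖x - y‖ := by
    have := norm_sub_norm_le y x
    rw [norm_sub_rev] at this
    linarith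
  calc greenMajorant x y ≤ (‖y‖ / 2) ^ (2 - dim E : ℝ) * ‖y‖ ^ (-(dim E : ℝ)) :=
        (greenMajorant_le_of_le_norm_sub hE (by positivity) hhalf).trans <|
          mul_le_mul_of_nonneg_left (inv_one_add_pow_le_rpow_neg hy le_rfl _) (by positivity)
    _ = 2 ^ (dim E - 2 : ℝ) * ‖y‖ ^ (2 - 2 * dim E : ℝ) := by
        rw [div_two_rpow hy.le, neg_sub, mul_assoc, ← rpow_add hy]
        ring_nf

variable [FiniteDimensional ℝ E] [MeasurableSpace E] [BorelSpace E]
  (μ : Measure E) [μ.IsAddHaarMeasure]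

theorem integrableOn_greenMajorant_ball [Nontrivial E] (x : E) (ρ : ℝ) :
    IntegrableOn (greenMajorant x) (ball x ρ) μ :=
  (integrableOn_ball_norm_sub_rpow μ (a := 2 - dim E) (by linarith) x ρ).mono'
    (measurable_greenMajorant x).aestronglyMeasurable <| .of_forall fun y => by
      rw [norm_of_nonneg (greenMajorant_nonneg x y)]
      exact greenMajorant_le x y

theorem integrableOn_greenMajorant_compl_ball_inter (hE : 2 ≤ dim E) {x : E} {ρ : ℝ}
    (hρ : 0 < ρ) (R : ℝ) : IntegrableOn (greenMajorant x) ((ball x ρ)ᶜ ∩ ball 0 R) μ := by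
  have : Nontrivial E := Module.nontrivial_of_finrank_pos (R := ℝ) (by omega)
  refine (IntegrableOn.mono_set ((integrableOn_ball_inv_one_add_norm_pow μ R).const_mul
    (ρ ^ (2 - dim E : ℝ))) inter_subset_right).mono'
    (measurable_greenMajorant x).aestronglyMeasurable
    (ae_restrict_of_forall_mem (measurableSet_ball.compl.inter measurableSet_ball) fun y hy => ?_)
  rw [norm_of_nonneg (greenMajorant_nonneg x y)]
  exact greenMajorant_le_of_le_norm_sub hE hρ (le_norm_sub_of_mem_compl_ball hy.1)

theorem integrableOn_greenMajorant_compl_ball_zero (hE : 2 < dim E) {x : E} {R : ℝ}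
    (hR : 0 < R) (hxR : 2 * ‖x‖ ≤ R) : IntegrableOn (greenMajorant x) (ball 0 R)ᶜ μ := by
  have : Nontrivial E := Module.nontrivial_of_finrank_pos (R := ℝ) (by omega)
  have hE' : (2 : ℝ) < dim E := by exact_mod_cast hE
  refine ((integrableOn_compl_ball_norm_rpow μ (a := 2 - 2 * dim E) (by linarith) hR).const_mul
    (2 ^ (dim E - 2 : ℝ))).mono' (measurable_greenMajorant x).aestronglyMeasurable
    (ae_restrict_of_forall_mem measurableSet_ball.compl fun y hy => ?_)
  have hRy : R ≤ ‖y‖ := by simpa using hy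
  rw [norm_of_nonneg (greenMajorant_nonneg x y)]
  exact greenMajorant_le_of_two_mul_norm_le hE.le (norm_pos_iff.1 (hR.trans_le hRy))
    (hxR.trans hRy)

theorem integrable_greenMajorant (hE : 2 < dim E) (x : E) : Integrable (greenMajorant x) μ := by
  have : Nontrivial E := Module.nontrivial_of_finrank_pos (R := ℝ) (by omega)
  set R := 2 * ‖x‖ + 1
  rw [← integrableOn_univ, ← union_compl_self (ball x 1), integrableOn_union,
    ← inter_union_sdiff (ball x 1)ᶜ (ball 0 R), integrableOn_union]
  exact ⟨integrableOn_greenMajorant_ball μ x 1,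
    integrableOn_greenMajorant_compl_ball_inter μ hE.le one_pos R,
    (integrableOn_greenMajorant_compl_ball_zero μ hE (R := R) (by positivity) (by linarith))
      |>.mono_set (sdiff_subset_compl _ _)⟩

theorem setIntegral_greenMajorant_ball_le [Nontrivial E] {x : E} (hx : x ≠ 0) :
    ∫ y in ball x (‖x‖ / 2), greenMajorant x y ∂μ ≤
      dim E * μ.real (ball 0 1) / 2 * (‖x‖ / 2) ^ (2 - dim E : ℝ) := by
  set t := ‖x‖ / 2 with ht_def
  have ht : 0 < t := by positivity
  have hbound (y) (hy : y ∈ ball x t) :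
      greenMajorant x y ≤ t ^ (-(dim E : ℝ)) * ‖x - y‖ ^ (2 - dim E : ℝ) := by
    refine greenMajorant_le_of_le_norm ht ?_
    have := norm_sub_norm_le x y
    rw [← dist_eq_norm, dist_comm] at this
    linarith [mem_ball.1 hy]
  calc ∫ y in ball x t, greenMajorant x y ∂μ
      ≤ ∫ y in ball x t, t ^ (-(dim E : ℝ)) * ‖x - y‖ ^ (2 - dim E : ℝ) ∂μ :=
        setIntegral_mono_on (integrableOn_greenMajorant_ball μ x t)
          ((integrableOn_ball_norm_sub_rpow μ (by linarith) x t).const_mul _)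
          measurableSet_ball hbound
    _ = dim E * μ.real (ball 0 1) / 2 * t ^ (2 - dim E : ℝ) := by
        rw [integral_const_mul, integral_ball_norm_sub_rpow μ (by linarith) x ht.le,
          show (dim E : ℝ) + (2 - dim E) = 2 by ring, mul_left_comm, ← mul_div_assoc,
          ← rpow_add ht]
        ring_nf

theorem setIntegral_greenMajorant_compl_ball_inter_le (hE : 2 ≤ dim E) {x : E} {ρ : ℝ}
    (hρ : 0 < ρ) {R : ℝ} (hR : 0 ≤ R) :
    ∫ y in (ball x ρ)ᶜ ∩ ball 0 R, greenMajorant x y ∂μ ≤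
      ρ ^ (2 - dim E : ℝ) * (μ.real (ball 0 1) * log (1 + R ^ dim E)) := by
  have : Nontrivial E := Module.nontrivial_of_finrank_pos (R := ℝ) (by omega)
  have hweight := integrableOn_ball_inv_one_add_norm_pow μ R
  calc ∫ y in (ball x ρ)ᶜ ∩ ball 0 R, greenMajorant x y ∂μ
      ≤ ∫ y in (ball x ρ)ᶜ ∩ ball 0 R, ρ ^ (2 - dim E : ℝ) * (1 + ‖y‖ ^ dim E)⁻¹ ∂μ :=
        setIntegral_mono_on (integrableOn_greenMajorant_compl_ball_inter μ hE hρ R)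
          (IntegrableOn.mono_set (hweight.const_mul _) inter_subset_right)
          (measurableSet_ball.compl.inter measurableSet_ball)
          fun y hy => greenMajorant_le_of_le_norm_sub hE hρ (le_norm_sub_of_mem_compl_ball hy.1)
    _ ≤ ρ ^ (2 - dim E : ℝ) * ∫ y in ball 0 R, (1 + ‖y‖ ^ dim E)⁻¹ ∂μ := by
        rw [integral_const_mul]
        exact mul_le_mul_of_nonneg_left (setIntegral_mono_set hweight
          (.of_forall fun y => by positivity) inter_subset_right.eventuallyLE) (by positivity)
    _ = ρ ^ (2 - dim E : ℝ) * (μ.real (ball 0 1) * log (1 + R ^ dim E)) := by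
        rw [integral_ball_inv_one_add_norm_pow μ hR]

theorem setIntegral_greenMajorant_compl_ball_zero_le (hE : 2 < dim E) {x : E} {R : ℝ}
    (hR : 0 < R) (hxR : 2 * ‖x‖ ≤ R) :
    ∫ y in (ball 0 R)ᶜ, greenMajorant x y ∂μ ≤
      dim E * μ.real (ball 0 1) / (dim E - 2) * (R / 2) ^ (2 - dim E : ℝ) := by
  have : Nontrivial E := Module.nontrivial_of_finrank_pos (R := ℝ) (by omega)
  have hE' : (2 : ℝ) < dim E := by exact_mod_cast hE
  calc ∫ y in (ball 0 R)ᶜ, greenMajorant x y ∂μ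
      ≤ ∫ y in (ball 0 R)ᶜ, 2 ^ (dim E - 2 : ℝ) * ‖y‖ ^ (2 - 2 * dim E : ℝ) ∂μ := by
        refine setIntegral_mono_on (integrableOn_greenMajorant_compl_ball_zero μ hE hR hxR)
          ((integrableOn_compl_ball_norm_rpow μ (by linarith) hR).const_mul _)
          measurableSet_ball.compl fun y hy => ?_
        have hRy : R ≤ ‖y‖ := by simpa using hy
        exact greenMajorant_le_of_two_mul_norm_le hE.le (norm_pos_iff.1 (hR.trans_le hRy))
          (hxR.trans hRy)
    _ = dim E * μ.real (ball 0 1) / (dim E - 2) * (R / 2) ^ (2 - dim E : ℝ) := by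
        rw [integral_const_mul, integral_compl_ball_norm_rpow μ (by linarith) hR,
          div_two_rpow hR.le, neg_sub]
        ring_nf

theorem exists_integral_greenMajorant_le (hE : 2 < dim E) :
    ∃ K > 0, ∀ x : E, 1 ≤ ‖x‖ →
      ∫ y, greenMajorant x y ∂μ ≤ K * log (2 + ‖x‖) * ‖x‖ ^ (2 - dim E : ℝ) := by
  have : Nontrivial E := Module.nontrivial_of_finrank_pos (R := ℝ) (by omega)
  have hE' : (0 : ℝ) < dim E - 2 := by rw [sub_pos]; exact_mod_cast hE
  have hV : 0 < μ.real (ball 0 1) :=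
    ENNReal.toReal_pos (measure_ball_pos μ 0 one_pos).ne' measure_ball_lt_top.ne
  refine ⟨dim E * μ.real (ball 0 1) * (5 / 2 * 2 ^ (dim E - 2 : ℝ) + 1 / (dim E - 2)),
    by positivity, fun x hx => ?_⟩
  have hr : 0 < ‖x‖ := one_pos.trans_le hx
  have hsplit := integral_le_setIntegral_add_inter_add_compl (integrable_greenMajorant μ hE x)
    (greenMajorant_nonneg x) (measurableSet_ball (x := x) (ε := ‖x‖ / 2))
    (measurableSet_ball (x := 0) (ε := 2 * ‖x‖))
  have hA := setIntegral_greenMajorant_ball_le μ (norm_pos_iff.1 hr)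
  have hB := setIntegral_greenMajorant_compl_ball_inter_le μ hE.le (x := x) (ρ := ‖x‖ / 2)
    (by positivity) (R := 2 * ‖x‖) (by positivity)
  have hC := setIntegral_greenMajorant_compl_ball_zero_le μ hE (x := x) (R := 2 * ‖x‖)
    (by positivity) le_rfl
  rw [div_two_rpow hr.le, neg_sub] at hA hB
  rw [mul_div_cancel_left₀ _ two_ne_zero] at hC
  have hB' := hB.trans <| mul_le_mul_of_nonneg_left (mul_le_mul_of_nonneg_left
    (log_one_add_two_mul_pow_le hr.le (n := dim E) (by omega)) hV.le) (by positivity)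
  have hL : 0 ≤ log (2 + ‖x‖) - 1 := by
    rw [sub_nonneg, le_log_iff_exp_le (by positivity)]
    linarith [exp_one_lt_d9]
  have h1 : 0 ≤ dim E * μ.real (ball 0 1) / 2 * (2 ^ (dim E - 2 : ℝ) * ‖x‖ ^ (2 - dim E : ℝ)) *
      (log (2 + ‖x‖) - 1) := by positivity
  have h2 : 0 ≤ dim E * μ.real (ball 0 1) / (dim E - 2) * ‖x‖ ^ (2 - dim E : ℝ) *
      (log (2 + ‖x‖) - 1) := by positivity
  linear_combination hsplit + hA + hB' + hC + h1 + h2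

end Majorant

theorem rpow_two_sub_finrank_euclideanSpace_fin_four {r : ℝ} (hr : 0 ≤ r) :
    r ^ (2 - dim (EuclideanSpace ℝ (Fin 4)) : ℝ) = (r ^ 2)⁻¹ := by
  rw [finrank_euclideanSpace_fin, show (2 : ℝ) - (4 : ℕ) = -2 by norm_num, rpow_neg hr,
    rpow_two]

theorem norm_kernel_mul_le_greenMajorant
    {b : EuclideanSpace ℝ (Fin 4) × EuclideanSpace ℝ (Fin 4) → ℂ} {M : ℝ}
    (hbM : ∀ x y, ‖b (x, y)‖ ≤ M) {f : EuclideanSpace ℝ (Fin 4) → ℂ} {C : ℝ}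
    (hfC : ∀ x, ‖f x‖ ≤ C / (1 + ‖x‖ ^ 4)) (x y : EuclideanSpace ℝ (Fin 4)) :
    ‖b (x, y) / ((‖x - y‖ : ℂ) ^ 2) * f y‖ ≤ M * C * greenMajorant x y := by
  have hM : 0 ≤ M := (norm_nonneg _).trans (hbM x y)
  rw [greenMajorant, rpow_two_sub_finrank_euclideanSpace_fin_four (norm_nonneg _),
    finrank_euclideanSpace_fin, norm_mul, norm_div, norm_pow, Complex.norm_real, norm_norm,
    div_eq_mul_inv]
  calc ‖b (x, y)‖ * (‖x - y‖ ^ 2)⁻¹ * ‖f y‖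
      ≤ M * (‖x - y‖ ^ 2)⁻¹ * (C / (1 + ‖y‖ ^ 4)) := by
        gcongr
        exacts [hbM x y, hfC y]
    _ = M * C * ((‖x - y‖ ^ 2)⁻¹ * (1 + ‖y‖ ^ 4)⁻¹) := by ring

/-- Proposition 4.1 of the paper: for a kernel `G(x,y) = b(x,y)/‖x-y‖²` with `b`
bounded and measurable, and a measurable `f` with `|f(x)| ≤ C/(1+‖x‖⁴)`, the function
`F(x) = ∫ G(x,y) f(y) dy` is well defined (the integrand is integrable for every `x`),
satisfies `|F(x)| ≤ K log(2+‖x‖)/‖x‖²` for `‖x‖ ≥ 1`, and in particular is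
`O(‖x‖^{-2+ε})` for every `ε > 0`. -/
theorem green_kernel_decay
    (b : EuclideanSpace ℝ (Fin 4) × EuclideanSpace ℝ (Fin 4) → ℂ)
    (hb : Measurable b) (M : ℝ) (hbM : ∀ x y, ‖b (x, y)‖ ≤ M)
    (f : EuclideanSpace ℝ (Fin 4) → ℂ) (hf : Measurable f)
    (C : ℝ) (hC : 0 < C) (hfC : ∀ x, ‖f x‖ ≤ C / (1 + ‖x‖ ^ 4)) :
    (∀ x, Integrable (fun y => b (x, y) / ((‖x - y‖ : ℂ) ^ 2) * f y)) ∧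
    (∃ K > (0 : ℝ), ∀ x : EuclideanSpace ℝ (Fin 4), 1 ≤ ‖x‖ →
      ‖∫ y, b (x, y) / ((‖x - y‖ : ℂ) ^ 2) * f y‖ ≤ K * Real.log (2 + ‖x‖) / ‖x‖ ^ 2) ∧
    (∀ ε > (0 : ℝ), ∃ K' > (0 : ℝ), ∀ x : EuclideanSpace ℝ (Fin 4), 1 ≤ ‖x‖ →
      ‖∫ y, b (x, y) / ((‖x - y‖ : ℂ) ^ 2) * f y‖ ≤ K' * ‖x‖ ^ (-2 + ε)) := by
  have hE : 2 < dim (EuclideanSpace ℝ (Fin 4)) := by simp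
  have hM : 0 ≤ M := (norm_nonneg _).trans (hbM 0 0)
  have hbound := norm_kernel_mul_le_greenMajorant hbM hfC
  have hint (x) := (integrable_greenMajorant volume hE x).const_mul (M * C)
  obtain ⟨K, hK, hKbound⟩ := exists_integral_greenMajorant_le volume hE
  have hdecay (x : EuclideanSpace ℝ (Fin 4)) (hx : 1 ≤ ‖x‖) :
      ‖∫ y, b (x, y) / ((‖x - y‖ : ℂ) ^ 2) * f y‖ ≤
        (M + 1) * C * K * (log (2 + ‖x‖) / ‖x‖ ^ 2) :=
    calc ‖∫ y, b (x, y) / ((‖x - y‖ : ℂ) ^ 2) * f y‖ ≤ M * C * ∫ y, greenMajorant x y :=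
          (norm_integral_le_of_norm_le (hint x) (.of_forall (hbound x))).trans_eq
            (integral_const_mul _ _)
      _ ≤ (M + 1) * C * (K * log (2 + ‖x‖) * (‖x‖ ^ 2)⁻¹) := by
          rw [← rpow_two_sub_finrank_euclideanSpace_fin_four (norm_nonneg x)]
          gcongr
          exacts [integral_nonneg (greenMajorant_nonneg x), by linarith, hKbound x hx]
      _ = (M + 1) * C * K * (log (2 + ‖x‖) / ‖x‖ ^ 2) := by ring
  refine ⟨fun x => (hint x).mono' (by fun_prop) (.of_forall (hbound x)),
    ⟨(M + 1) * C * K, by positivity, fun x hx => (hdecay x hx).trans_eq (mul_div_assoc ..).symm⟩,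
    fun ε hε => ⟨(M + 1) * C * K * (3 ^ ε / ε), by positivity, fun x hx => ?_⟩⟩
  rw [mul_assoc _ (3 ^ ε / ε)]
  exact (hdecay x hx).trans (by gcongr; exact log_two_add_div_sq_le hx hε)
end

section
/- For every x ∈ ℝ⁴ with x ≠ 0, the integral of 1/(‖x-y‖²(1+‖y‖⁴)) over the ball {y ∈ ℝ⁴ : ‖y‖ ≤ ‖x‖/2} satisfies ∫_{‖y‖ ≤ ‖x‖/2} dy/(‖x-y‖²(1+‖y‖⁴)) ≤ 2π² ‖x‖^{-2} log(1 + ‖x‖⁴/16). -/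
/-!
On the ball `‖y‖ ≤ ‖x‖/2` the triangle inequality gives `‖x - y‖ ≥ ‖x‖/2`, so the integrand is at
most `4 ‖x‖⁻² / (1 + ‖y‖⁴)`. The remaining integral is computed in polar coordinates: the unit ball
of `ℝ⁴` has volume `π²/2`, and `∫₀^R r³/(1+r⁴) dr = log(1+R⁴)/4`.
-/

open MeasureTheory Real Set Metric Module

section Radial

variable {E F : Type*} [NormedAddCommGroup E] [NormedSpace ℝ E] [FiniteDimensional ℝ E]
  [Nontrivial E] [MeasurableSpace E] [BorelSpace E] [NormedAddCommGroup F] [NormedSpace ℝ F]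

theorem setIntegral_closedBall_fun_norm_addHaar (μ : Measure E) [μ.IsAddHaarMeasure]
    (f : ℝ → F) {R : ℝ} (hR : 0 ≤ R) :
    ∫ x in closedBall (0 : E) R, f ‖x‖ ∂μ
      = finrank ℝ E • μ.real (ball 0 1) • ∫ r in (0 : ℝ)..R, r ^ (finrank ℝ E - 1) • f r := by
  have h_indicator : (closedBall (0 : E) R).indicator (fun x ↦ f ‖x‖)
      = fun x ↦ (Iic R).indicator f ‖x‖ := by
    ext x
    simp only [indicator, mem_closedBall_zero_iff, mem_Iic]
  rw [← integral_indicator measurableSet_closedBall, h_indicator, integral_fun_norm_addHaar,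
    ← indicator_smul, setIntegral_indicator measurableSet_Iic, Ioi_inter_Iic,
    intervalIntegral.integral_of_le hR]

end Radial

theorem integral_pow_three_div_one_add_pow_four (R : ℝ) :
    ∫ r in (0 : ℝ)..R, r ^ 3 / (1 + r ^ 4) = log (1 + R ^ 4) / 4 := by
  have h_deriv (r : ℝ) : HasDerivAt (fun t ↦ log (1 + t ^ 4) / 4) (r ^ 3 / (1 + r ^ 4)) r := by
    have h_pos : 0 < 1 + r ^ 4 := by positivity
    refine ((((hasDerivAt_pow 4 r).const_add 1).log h_pos.ne').div_const 4).congr_deriv ?_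
    field_simp
    ring
  have h_cont : Continuous fun r : ℝ ↦ r ^ 3 / (1 + r ^ 4) :=
    (continuous_pow 3).div (by fun_prop) fun r ↦ by positivity
  rw [intervalIntegral.integral_eq_sub_of_hasDerivAt (fun r _ ↦ h_deriv r)
    (h_cont.intervalIntegrable 0 R)]
  simp

section FinrankFour

variable {E : Type*} [NormedAddCommGroup E] [InnerProductSpace ℝ E] [FiniteDimensional ℝ E]
  [MeasurableSpace E] [BorelSpace E]

theorem measureReal_ball_zero_one_of_finrank_eq_four (hE : finrank ℝ E = 4) :
    volume.real (ball (0 : E) 1) = π ^ 2 / 2 := by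
  have : Nontrivial E := nontrivial_of_finrank_pos (R := ℝ) (by omega)
  rw [measureReal_def, InnerProductSpace.volume_ball_of_dim_even (k := 2) hE]
  simp only [ENNReal.ofReal_one, one_pow, one_mul, Nat.factorial]
  exact ENNReal.toReal_ofReal (by positivity)

theorem setIntegral_closedBall_one_div_one_add_norm_pow_four (hE : finrank ℝ E = 4) {R : ℝ}
    (hR : 0 ≤ R) :
    ∫ y in closedBall (0 : E) R, 1 / (1 + ‖y‖ ^ 4) = π ^ 2 / 2 * log (1 + R ^ 4) := by
  have : Nontrivial E := nontrivial_of_finrank_pos (R := ℝ) (by omega)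
  rw [setIntegral_closedBall_fun_norm_addHaar volume (fun r ↦ 1 / (1 + r ^ 4)) hR, hE,
    measureReal_ball_zero_one_of_finrank_eq_four hE]
  simp only [smul_eq_mul, nsmul_eq_mul, Nat.add_one_sub_one, mul_one_div,
    integral_pow_three_div_one_add_pow_four]
  ring

end FinrankFour

theorem half_norm_le_norm_sub_of_norm_le {G : Type*} [SeminormedAddCommGroup G] {x y : G}
    (hy : ‖y‖ ≤ ‖x‖ / 2) : ‖x‖ / 2 ≤ ‖x - y‖ := by
  linarith [norm_sub_norm_le x y]

/-- The estimate for the first term in the decomposition used in the proof of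
Proposition 4.1: the integral of `1/(‖x-y‖²(1+‖y‖⁴))` over the ball of radius `‖x‖/2`
centered at the origin is at most `2π² ‖x‖⁻² log(1 + ‖x‖⁴/16)`. -/
theorem firstTerm_estimate (x : EuclideanSpace ℝ (Fin 4)) (hx : x ≠ 0) :
    ∫ y in Metric.closedBall (0 : EuclideanSpace ℝ (Fin 4)) (‖x‖ / 2),
        1 / (‖x - y‖ ^ 2 * (1 + ‖y‖ ^ 4))
      ≤ 2 * π ^ 2 * ‖x‖⁻¹ ^ 2 * Real.log (1 + ‖x‖ ^ 4 / 16) := by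
  set R := ‖x‖ / 2
  have hR : 0 < R := by positivity
  set B := closedBall (0 : EuclideanSpace ℝ (Fin 4)) R
  have h_pointwise : ∀ y ∈ B,
      1 / (‖x - y‖ ^ 2 * (1 + ‖y‖ ^ 4)) ≤ 1 / R ^ 2 * (1 / (1 + ‖y‖ ^ 4)) := by
    intro y hy
    have h_dist := half_norm_le_norm_sub_of_norm_le (mem_closedBall_zero_iff.mp hy)
    rw [one_div_mul_one_div]
    gcongr
  have h_integrable : IntegrableOn (fun y ↦ 1 / R ^ 2 * (1 / (1 + ‖y‖ ^ 4))) B :=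
    (continuous_const.mul (continuous_const.div (by fun_prop) fun y ↦ by positivity))
      |>.continuousOn.integrableOn_compact (isCompact_closedBall 0 R)
  calc _ ≤ ∫ y in B, 1 / R ^ 2 * (1 / (1 + ‖y‖ ^ 4)) :=
        integral_mono_of_nonneg (.of_forall fun y ↦ by positivity) h_integrable
          ((ae_restrict_iff' measurableSet_closedBall).mpr (.of_forall h_pointwise))
    _ = 1 / R ^ 2 * (π ^ 2 / 2 * log (1 + R ^ 4)) := by
        rw [integral_const_mul, setIntegral_closedBall_one_div_one_add_norm_pow_four
          finrank_euclideanSpace_fin hR.le]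
    _ = 2 * π ^ 2 * ‖x‖⁻¹ ^ 2 * log (1 + ‖x‖ ^ 4 / 16) := by
        simp only [R]
        ring_nf
end

section
/- For every x ∈ ℝ⁴ with x ≠ 0, the integral of 1/(‖x-y‖²(1+‖y‖⁴)) over the ball {y ∈ ℝ⁴ : ‖y-x‖ ≤ ‖x‖/2} centered at x satisfies ∫_{‖y-x‖ ≤ ‖x‖/2} dy/(‖x-y‖²(1+‖y‖⁴)) ≤ 4π² ‖x‖^{-2}. -/
/-! On the ball of radius `‖x‖/2` about `x` every point has norm at least `‖x‖/2`, so the factor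
`1/(1+‖y‖⁴)` is at most `16/‖x‖⁴` there. What remains is `∫ ‖x - y‖⁻²` over that ball, which after
translating to the origin is computed in polar coordinates: in dimension `n` the integral of
`‖z‖^(-s)` over a ball of radius `R` is `n/(n - s) · vol(B₁) · R^(n - s)`, which for `n = 4`,
`s = 2` and `vol(B₁) = π²/2` is `π² R²`. -/

open MeasureTheory Real Set Metric

lemma integral_Ioi_pow_mul_indicator_rpow_neg {n : ℕ} {s R : ℝ} (hn : 1 ≤ n) (hs : s < n)
    (hR : 0 ≤ R) :
    ∫ y in Ioi (0 : ℝ), y ^ (n - 1) • (Iic R).indicator (fun r => r ^ (-s)) y =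
      R ^ (n - s) / (n - s) := by
  have hind (y : ℝ) : y ^ (n - 1) • (Iic R).indicator (fun r => r ^ (-s)) y =
      (Iic R).indicator (fun r => r ^ (n - 1) * r ^ (-s)) y := by
    by_cases hy : y ≤ R <;> simp [hy]
  calc ∫ y in Ioi (0 : ℝ), y ^ (n - 1) • (Iic R).indicator (fun r => r ^ (-s)) y
      = ∫ y in Ioc 0 R, y ^ ((n : ℝ) - 1 - s) := by
        simp only [hind]
        rw [setIntegral_indicator measurableSet_Iic, Ioi_inter_Iic]
        refine setIntegral_congr_fun measurableSet_Ioc fun y hy => ?_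
        rw [sub_eq_add_neg _ s, rpow_add hy.1, ← rpow_natCast, Nat.cast_sub hn, Nat.cast_one]
    _ = R ^ (n - s) / (n - s) := by
        rw [← intervalIntegral.integral_of_le hR, integral_rpow (Or.inl (by linarith)),
          zero_rpow (by linarith)]
        ring_nf

section PolarCoordinates

variable {E : Type*} [NormedAddCommGroup E] [NormedSpace ℝ E] [FiniteDimensional ℝ E]
  [Nontrivial E] [MeasurableSpace E] [BorelSpace E] (μ : Measure E) [μ.IsAddHaarMeasure]
  {s R : ℝ}

local notation "dim" => Module.finrank ℝ

lemma integral_closedBall_norm_rpow_neg (hs : s < dim E) (hR : 0 ≤ R) :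
    ∫ x in closedBall (0 : E) R, ‖x‖ ^ (-s) ∂μ =
      dim E / (dim E - s) * μ.real (ball 0 1) * R ^ (dim E - s) := by
  have hind : (closedBall (0 : E) R).indicator (fun x => ‖x‖ ^ (-s)) =
      fun x => (Iic R).indicator (fun r => r ^ (-s)) ‖x‖ := by
    ext x
    by_cases hx : ‖x‖ ≤ R <;> simp [hx]
  rw [← integral_indicator measurableSet_closedBall, hind, integral_fun_norm_addHaar,
    integral_Ioi_pow_mul_indicator_rpow_neg Module.finrank_pos hs hR, nsmul_eq_mul, smul_eq_mul]
  ring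

lemma integrableOn_closedBall_norm_rpow_neg (hs : s < dim E) :
    IntegrableOn (fun x : E => ‖x‖ ^ (-s)) (closedBall 0 R) μ := by
  refine (integrableOn_ball_of_norm_le_rpow (C := 1) (r := R + 1) Module.finrank_pos hs ?_
    (measurable_norm.pow_const _).aestronglyMeasurable).mono_set
    (closedBall_subset_ball (lt_add_one R))
  refine ae_of_all _ fun x => ?_
  rw [one_mul, Real.norm_of_nonneg (by positivity)]

end PolarCoordinates

lemma indicator_closedBall_comp_sub_left {G M : Type*} [SeminormedAddCommGroup G] [Zero M]
    (c : G) (R : ℝ) (g : G → M) :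
    (closedBall c R).indicator (fun y => g (c - y)) =
      fun y => (closedBall 0 R).indicator g (c - y) := by
  ext y
  have hmem : c - y ∈ closedBall (0 : G) R ↔ y ∈ closedBall c R := by
    rw [mem_closedBall_zero_iff, mem_closedBall_iff_norm']
  by_cases hy : y ∈ closedBall c R
  · rw [indicator_of_mem hy, indicator_of_mem (hmem.mpr hy)]
  · rw [indicator_of_notMem hy, indicator_of_notMem (mt hmem.mp hy)]

section Translation

variable {G F : Type*} [NormedAddCommGroup G] [MeasurableSpace G] [BorelSpace G]
  [NormedAddCommGroup F] (μ : Measure G) [μ.IsNegInvariant] [μ.IsAddLeftInvariant]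
  (c : G) (R : ℝ)

lemma setIntegral_closedBall_comp_sub_left [NormedSpace ℝ F] (g : G → F) :
    ∫ y in closedBall c R, g (c - y) ∂μ = ∫ z in closedBall 0 R, g z ∂μ := by
  rw [← integral_indicator measurableSet_closedBall, ← integral_indicator measurableSet_closedBall,
    indicator_closedBall_comp_sub_left, integral_sub_left_eq_self]

lemma IntegrableOn.comp_sub_left_closedBall {g : G → F}
    (hg : IntegrableOn g (closedBall 0 R) μ) :
    IntegrableOn (fun y => g (c - y)) (closedBall c R) μ := by
  rw [← integrable_indicator_iff measurableSet_closedBall] at hg ⊢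
  rw [indicator_closedBall_comp_sub_left]
  exact hg.comp_sub_left c

end Translation

section HalfBall

variable {E : Type*} [SeminormedAddCommGroup E] {x y : E}

lemma le_norm_of_mem_closedBall_half (hy : y ∈ closedBall x (‖x‖ / 2)) : ‖x‖ / 2 ≤ ‖y‖ := by
  have := norm_sub_norm_le x y
  rw [mem_closedBall_iff_norm'] at hy
  linarith

lemma inv_one_add_pow_four_le (hx : 0 < ‖x‖) (hy : y ∈ closedBall x (‖x‖ / 2)) :
    (1 + ‖y‖ ^ 4)⁻¹ ≤ 16 / ‖x‖ ^ 4 := by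
  have hpow : (‖x‖ / 2) ^ 4 ≤ ‖y‖ ^ 4 := by gcongr; exact le_norm_of_mem_closedBall_half hy
  rw [← inv_div]
  apply inv_anti₀ (by positivity)
  linarith

lemma one_div_sq_mul_one_add_pow_four_le (hx : 0 < ‖x‖) (hy : y ∈ closedBall x (‖x‖ / 2)) :
    1 / (‖x - y‖ ^ 2 * (1 + ‖y‖ ^ 4)) ≤ 16 / ‖x‖ ^ 4 * ‖x - y‖ ^ (-2 : ℝ) := by
  calc 1 / (‖x - y‖ ^ 2 * (1 + ‖y‖ ^ 4)) = (1 + ‖y‖ ^ 4)⁻¹ * ‖x - y‖ ^ (-2 : ℝ) := by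
        rw [rpow_neg (norm_nonneg _), rpow_two, one_div, mul_inv, mul_comm]
    _ ≤ 16 / ‖x‖ ^ 4 * ‖x - y‖ ^ (-2 : ℝ) := by
        gcongr
        exact inv_one_add_pow_four_le hx hy

end HalfBall

lemma EuclideanSpace.volume_real_ball_fin_four :
    volume.real (ball (0 : EuclideanSpace ℝ (Fin 4)) 1) = π ^ 2 / 2 := by
  rw [measureReal_def, InnerProductSpace.volume_ball_of_dim_even (k := 2) (by simp),
    ENNReal.ofReal_one, one_pow, one_mul, ENNReal.toReal_ofReal (by positivity)]
  norm_num

/-- The estimate for the second term in the decomposition used in the proof of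
Proposition 4.1: the integral of `1/(‖x-y‖²(1+‖y‖⁴))` over the ball of radius `‖x‖/2`
centered at `x` is at most `4π² ‖x‖⁻²`. -/
theorem secondTerm_estimate (x : EuclideanSpace ℝ (Fin 4)) (hx : x ≠ 0) :
    ∫ y in Metric.closedBall x (‖x‖ / 2),
        1 / (‖x - y‖ ^ 2 * (1 + ‖y‖ ^ 4))
      ≤ 4 * π ^ 2 * ‖x‖⁻¹ ^ 2 := by
  have hx' : 0 < ‖x‖ := norm_pos_iff.mpr hx
  have hdim : (Module.finrank ℝ (EuclideanSpace ℝ (Fin 4)) : ℝ) = 4 := by simp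
  have hs : (2 : ℝ) < Module.finrank ℝ (EuclideanSpace ℝ (Fin 4)) := by rw [hdim]; norm_num
  calc ∫ y in closedBall x (‖x‖ / 2), 1 / (‖x - y‖ ^ 2 * (1 + ‖y‖ ^ 4))
      ≤ ∫ y in closedBall x (‖x‖ / 2), 16 / ‖x‖ ^ 4 * ‖x - y‖ ^ (-2 : ℝ) :=
        integral_mono_of_nonneg (ae_of_all _ fun y => by positivity)
          ((IntegrableOn.comp_sub_left_closedBall volume x _
            (integrableOn_closedBall_norm_rpow_neg volume hs)).const_mul _)
          (ae_restrict_of_forall_mem measurableSet_closedBall fun y hy =>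
            one_div_sq_mul_one_add_pow_four_le hx' hy)
    _ = 16 / ‖x‖ ^ 4 * ∫ z in closedBall (0 : EuclideanSpace ℝ (Fin 4)) (‖x‖ / 2),
          ‖z‖ ^ (-2 : ℝ) := by
        rw [integral_const_mul, setIntegral_closedBall_comp_sub_left volume x _ (‖·‖ ^ (-2 : ℝ))]
    _ = 4 * π ^ 2 * ‖x‖⁻¹ ^ 2 := by
        rw [integral_closedBall_norm_rpow_neg volume hs (by positivity),
          EuclideanSpace.volume_real_ball_fin_four, hdim, show (4 : ℝ) - 2 = 2 by norm_num,
          rpow_two]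
        field_simp
        ring
end

section
/- There exists a constant K > 0 such that for every x ∈ ℝ⁴ with x ≠ 0, the integral of 1/(‖x-y‖² ‖y‖⁴) over the region {y ∈ ℝ⁴ : ‖y‖ ≥ ‖x‖/2 and ‖y-x‖ ≥ ‖x‖/2} satisfies ∫ dy/(‖x-y‖² ‖y‖⁴) ≤ K ‖x‖^{-2}. (One may take K = 8π², by splitting the region according to whether ‖y-x‖ ≥ ‖y‖ or ‖y-x‖ ≤ ‖y‖ and bounding the integrand by ‖y‖^{-6} or ‖y-x‖^{-6} respectively.) -/
/-!
On the region both `‖y‖` and `‖y - x‖` are at least `r = ‖x‖/2`, and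
`1/(‖x-y‖²‖y‖⁴) ≤ min(‖y‖, ‖y-x‖)⁻⁶ ≤ g(y) + g(y - x)`
with `g(y) = ‖y‖⁻⁶ 1_{‖y‖ ≥ r}`.
By translation invariance both terms have the same integral, which polar coordinates evaluate to
`4 vol(B₁) r⁻² / 2 = π² r⁻²`; hence the bound `2π² r⁻² = 8π² ‖x‖⁻²`.
-/

open MeasureTheory Real
open Set Metric Module

lemma inv_rpow_mul_rpow_le_rpow_neg_of_le {a b p q : ℝ} (ha : 0 < a) (hab : a ≤ b)
    (hq : 0 ≤ q) : (a ^ p * b ^ q)⁻¹ ≤ a ^ (-(p + q)) := by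
  rw [rpow_neg ha.le, rpow_add ha]
  gcongr

lemma inv_rpow_mul_rpow_le_add {a b p q : ℝ} (ha : 0 < a) (hb : 0 < b) (hp : 0 ≤ p)
    (hq : 0 ≤ q) : (a ^ p * b ^ q)⁻¹ ≤ a ^ (-(p + q)) + b ^ (-(p + q)) := by
  rcases le_total a b with hab | hba
  · linarith [inv_rpow_mul_rpow_le_rpow_neg_of_le (p := p) ha hab hq,
      rpow_nonneg hb.le (-(p + q))]
  · have := inv_rpow_mul_rpow_le_rpow_neg_of_le (p := q) hb hba hp
    rw [mul_comm, add_comm q] at this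
    linarith [rpow_nonneg ha.le (-(p + q))]

lemma inv_norm_sub_rpow_mul_norm_rpow_le {E : Type*} [SeminormedAddCommGroup E] {x y : E}
    {r p q : ℝ} (hr : 0 < r) (hy : r ≤ ‖y‖) (hyx : r ≤ ‖y - x‖) (hp : 0 ≤ p) (hq : 0 ≤ q) :
    (‖x - y‖ ^ p * ‖y‖ ^ q)⁻¹ ≤
      (Ici r).indicator (fun t ↦ t ^ (-(p + q))) ‖y‖ +
        (Ici r).indicator (fun t ↦ t ^ (-(p + q))) ‖y - x‖ := by
  rw [indicator_of_mem (mem_Ici.2 hy), indicator_of_mem (mem_Ici.2 hyx), norm_sub_rev,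
    add_comm]
  exact inv_rpow_mul_rpow_le_add (hr.trans_le hyx) (hr.trans_le hy) hp hq

lemma pow_mul_indicator_Ici_rpow_neg {n : ℕ} (hn : 1 ≤ n) {r s t : ℝ} (ht : 0 < t) :
    t ^ (n - 1) * (Ici r).indicator (fun t ↦ t ^ (-s)) t =
      (Ici r).indicator (fun t ↦ t ^ ((n : ℝ) - 1 - s)) t := by
  by_cases htr : t ∈ Ici r
  · rw [indicator_of_mem htr, indicator_of_mem htr, ← rpow_natCast, ← rpow_add ht,
      Nat.cast_sub hn, Nat.cast_one, sub_eq_add_neg _ s]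
  · rw [indicator_of_notMem htr, indicator_of_notMem htr, mul_zero]

section Radial

variable {E : Type*} [NormedAddCommGroup E] [NormedSpace ℝ E] [FiniteDimensional ℝ E]
  [Nontrivial E] [MeasurableSpace E] [BorelSpace E] (μ : Measure E) [μ.IsAddHaarMeasure]
  {r s : ℝ}

theorem integrable_indicator_Ici_norm_rpow_neg (hr : 0 < r) (hs : finrank ℝ E < s) :
    Integrable (fun y : E ↦ (Ici r).indicator (fun t ↦ t ^ (-s)) ‖y‖) μ := by
  rw [integrable_fun_norm_addHaar μ]
  have hint : IntegrableOn (fun t ↦ t ^ ((finrank ℝ E : ℝ) - 1 - s)) (Ici r) :=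
    (integrableOn_Ici_iff_integrableOn_Ioi).2 (integrableOn_Ioi_rpow_of_lt (by linarith) hr)
  refine ((integrable_indicator_iff measurableSet_Ici).2 hint).integrableOn.congr_fun
    (fun t ht ↦ ?_) measurableSet_Ioi
  exact (pow_mul_indicator_Ici_rpow_neg finrank_pos ht).symm

theorem integral_indicator_Ici_norm_rpow_neg (hr : 0 < r) (hs : finrank ℝ E < s) :
    ∫ y : E, (Ici r).indicator (fun t ↦ t ^ (-s)) ‖y‖ ∂μ =
      finrank ℝ E * μ.real (ball 0 1) * r ^ ((finrank ℝ E : ℝ) - s) / (s - finrank ℝ E) := by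
  rw [integral_fun_norm_addHaar μ]
  simp only [nsmul_eq_mul, smul_eq_mul]
  rw [setIntegral_congr_fun measurableSet_Ioi
      (fun t ht ↦ pow_mul_indicator_Ici_rpow_neg finrank_pos ht),
    setIntegral_indicator measurableSet_Ici, inter_eq_right.2 (Ici_subset_Ioi.2 hr),
    integral_Ici_eq_integral_Ioi, integral_Ioi_rpow_of_lt (by linarith) hr,
    show (finrank ℝ E : ℝ) - 1 - s + 1 = finrank ℝ E - s by ring, neg_div, ← div_neg,
    neg_sub]
  ring

end Radial

/-- The estimate for the third term in the decomposition used in the proof of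
Proposition 4.1: there is a constant `K > 0` (one may take `K = 8π²`) so that the
integral of `1/(‖x-y‖² ‖y‖⁴)` over the complement of the two balls of radius `‖x‖/2`
centered at `0` and at `x` is at most `K ‖x‖⁻²`. -/
theorem thirdTerm_estimate :
    ∃ K > (0 : ℝ), ∀ x : EuclideanSpace ℝ (Fin 4), x ≠ 0 →
      ∫ y in {y : EuclideanSpace ℝ (Fin 4) | ‖x‖ / 2 ≤ ‖y‖ ∧ ‖x‖ / 2 ≤ ‖y - x‖},
          1 / (‖x - y‖ ^ 2 * ‖y‖ ^ 4)
        ≤ K / ‖x‖ ^ 2 := by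
  refine ⟨8 * π ^ 2, by positivity, fun x hx ↦ ?_⟩
  set r := ‖x‖ / 2
  have hr : 0 < r := by positivity
  have hdim : finrank ℝ (EuclideanSpace ℝ (Fin 4)) = 4 := finrank_euclideanSpace_fin
  set g : EuclideanSpace ℝ (Fin 4) → ℝ :=
    fun y ↦ (Ici r).indicator (fun t ↦ t ^ (-(2 + 4) : ℝ)) ‖y‖
  have hg : Integrable g :=
    integrable_indicator_Ici_norm_rpow_neg volume hr (by norm_num [hdim])
  have hgx : Integrable (fun y ↦ g (y - x)) := hg.comp_sub_right x
  have hg_nonneg (y) : 0 ≤ g y := indicator_nonneg (fun t ht ↦ rpow_nonneg (hr.le.trans ht) _) _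
  have hS : MeasurableSet {y : EuclideanSpace ℝ (Fin 4) | r ≤ ‖y‖ ∧ r ≤ ‖y - x‖} := by
    measurability
  have hbound : ∀ y ∈ {y : EuclideanSpace ℝ (Fin 4) | r ≤ ‖y‖ ∧ r ≤ ‖y - x‖},
      1 / (‖x - y‖ ^ 2 * ‖y‖ ^ 4) ≤ g y + g (y - x) := by
    rintro y ⟨hy, hyx⟩
    simpa only [one_div, rpow_ofNat] using
      inv_norm_sub_rpow_mul_norm_rpow_le (p := 2) (q := 4) hr hy hyx (by norm_num) (by norm_num)
  have hvol : volume.real (ball (0 : EuclideanSpace ℝ (Fin 4)) 1) = π ^ 2 / 2 := by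
    simp [measureReal_def, InnerProductSpace.volume_ball_of_dim_even (k := 2) hdim]
    positivity
  calc _ ≤ ∫ y in _, g y + g (y - x) :=
        integral_mono_of_nonneg (.of_forall fun y ↦ by positivity) (hg.add hgx).integrableOn
          (ae_restrict_of_forall_mem hS hbound)
    _ ≤ ∫ y, g y + g (y - x) :=
        setIntegral_le_integral (hg.add hgx)
          (.of_forall fun y ↦ add_nonneg (hg_nonneg _) (hg_nonneg _))
    _ = 2 * ∫ y, g y := by rw [integral_add hg hgx, integral_sub_right_eq_self g x]; ring
    _ = 8 * π ^ 2 / ‖x‖ ^ 2 := by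
        rw [integral_indicator_Ici_norm_rpow_neg volume hr (by norm_num [hdim]), hvol, hdim,
          show ((4 : ℕ) : ℝ) - (2 + 4) = -2 by norm_num, rpow_neg hr.le, rpow_two]
        field_simp
        ring
end

section
/- Let θ be a real antisymmetric 4×4 matrix, and let P, Q : ℝ⁴ → ℂ be smooth functions such that there exist constants C > 0 and ε > 0 with |P(x) ∂_ν Q(x)| ≤ C(1+‖x‖)^{-3-ε} and |∂_μ(P ∂_ν Q)(x)| ≤ C(1+‖x‖)^{-4-ε} for all x and all μ, ν ∈ {1,2,3,4}. Then ∫_{ℝ⁴} Σ_{μ,ν=1}^{4} θ^{μν} (∂_μ P)(x)(∂_ν Q)(x) dx = 0. -/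
open MeasureTheory Real

open Filter Topology in
private lemma abs_coord_le_norm' (x : EuclideanSpace ℝ (Fin 4)) (μ : Fin 4) : |x μ| ≤ ‖x‖ := by
  rw [EuclideanSpace.norm_eq, ← Real.sqrt_sq_eq_abs]
  apply Real.sqrt_le_sqrt
  calc x μ ^ 2 = ‖x μ‖ ^ 2 := by rw [Real.norm_eq_abs, sq_abs]
  _ ≤ ∑ i, ‖x i‖ ^ 2 :=
      Finset.single_le_sum (f := fun i => ‖x i‖ ^ 2) (fun i _ => sq_nonneg _) (Finset.mem_univ μ)

private lemma integrable_decay' (g : EuclideanSpace ℝ (Fin 4) → ℂ) (hg : Continuous g)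
    (C r : ℝ) (hr : (4:ℝ) < r) (hb : ∀ x, ‖g x‖ ≤ C * (1 + ‖x‖) ^ (-r)) :
    Integrable g := by
  refine Integrable.mono' ((integrable_one_add_norm (E := EuclideanSpace ℝ (Fin 4))
    (μ := volume) (r := r) ?_).const_mul C) hg.aestronglyMeasurable (.of_forall hb)
  rw [finrank_euclideanSpace]; simpa using hr

/-- The partial derivative of a function `ℝ⁴ → ℂ` in the `μ`-th coordinate direction. -/
noncomputable def pder (μ : Fin 4) (h : EuclideanSpace ℝ (Fin 4) → ℂ)
    (x : EuclideanSpace ℝ (Fin 4)) : ℂ :=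
  fderiv ℝ h x (EuclideanSpace.single μ 1)

open Filter Topology in
/-- The integral over `ℝ⁴` of a partial derivative of a smooth function decaying faster than
`‖x‖⁻³` whose derivative decays faster than `‖x‖⁻⁴` vanishes. -/
private lemma integral_pder_eq_zero' (μ : Fin 4) (f : EuclideanSpace ℝ (Fin 4) → ℂ)
    (hf : ContDiff ℝ (⊤ : ℕ∞) f) (C ε : ℝ) (hC : 0 ≤ C) (hε : 0 < ε)
    (h1 : ∀ x, ‖f x‖ ≤ C * (1 + ‖x‖) ^ (-3 - ε))
    (h2 : ∀ x, ‖pder μ f x‖ ≤ C * (1 + ‖x‖) ^ (-4 - ε)) :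
    ∫ x, pder μ f x = 0 := by
  have hfc : Continuous (pder μ f) := (hf.continuous_fderiv (by simp)).clm_apply continuous_const
  have hint : Integrable (pder μ f) := by
    refine integrable_decay' _ hfc C (4 + ε) (by linarith) fun x => ?_
    rw [show -(4 + ε) = -4 - ε by ring]; exact h2 x
  -- the measurable equivalence splitting off coordinate μ
  set E : (ℝ × (Fin 3 → ℝ)) ≃ᵐ EuclideanSpace ℝ (Fin 4) :=
    (MeasurableEquiv.piFinSuccAbove (fun _ : Fin 4 => ℝ) μ).symm.trans
      (MeasurableEquiv.toLp 2 (Fin 4 → ℝ)) with hE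
  have mp : MeasurePreserving E volume volume :=
    ((EuclideanSpace.volume_preserving_symm_measurableEquiv_toLp (Fin 4)).symm).comp
      ((volume_preserving_piFinSuccAbove (fun _ : Fin 4 => ℝ) μ).symm)
  have hEapp : ∀ (s : ℝ) (y : Fin 3 → ℝ) (i : Fin 4),
      (E (s, y)) i = Fin.insertNth (α := fun _ : Fin 4 => ℝ) μ s y i := by
    intro s y i
    simp [hE, MeasurableEquiv.trans_apply, MeasurableEquiv.coe_toLp,
      MeasurableEquiv.piFinSuccAbove_symm_apply, PiLp.toLp_apply]
  have hcoord : ∀ (t : ℝ) (y : Fin 3 → ℝ),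
      E (t, y) = E (0, y) + t • EuclideanSpace.single μ (1:ℝ) := by
    intro t y
    apply PiLp.ext
    intro i
    rw [PiLp.add_apply, PiLp.smul_apply, hEapp, hEapp, EuclideanSpace.single_apply, smul_eq_mul]
    refine Fin.succAboveCases μ ?_ ?_ i
    · simp
    · intro j; simp [Fin.succAbove_ne μ j]
  -- transfer the integral to the product space
  rw [← mp.integral_comp E.measurableEmbedding (pder μ f)]
  have hintE : Integrable ((pder μ f) ∘ E) volume :=
    (mp.integrable_comp hint.aestronglyMeasurable).2 hint
  rw [Measure.volume_eq_prod] at hintE ⊢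
  rw [show (fun x : ℝ × (Fin 3 → ℝ) => pder μ f (E x)) = (pder μ f) ∘ E from rfl]
  rw [integral_prod_symm _ hintE]
  -- reduce to the fundamental theorem of calculus along each line
  have hae : ∀ᵐ y : (Fin 3 → ℝ), (∫ t : ℝ, ((pder μ f) ∘ E) (t, y)) = 0 := by
    filter_upwards [hintE.prod_left_ae] with y hy
    set v := EuclideanSpace.single μ (1:ℝ) with hv
    set x0 := E (0, y) with hx0
    have hc : ∀ t : ℝ, HasDerivAt (fun s : ℝ => x0 + s • v) v t := by
      intro t
      simpa using ((hasDerivAt_id t).smul_const v).const_add x0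
    have hder : ∀ t : ℝ, HasDerivAt (fun s : ℝ => f (x0 + s • v)) (((pder μ f) ∘ E) (t, y)) t := by
      intro t
      have := ((hf.differentiable (by simp) (x0 + t • v)).hasFDerivAt).comp_hasDerivAt t (hc t)
      rw [Function.comp_apply, hcoord t y]; exact this
    have hcμ : ∀ t : ℝ, |t| ≤ ‖x0 + t • v‖ := by
      intro t
      have h0 : (x0 + t • v) μ = t := by
        rw [← hcoord t y, hEapp, Fin.insertNth_apply_same]
      calc |t| = |(x0 + t • v) μ| := by rw [h0]
      _ ≤ ‖x0 + t • v‖ := abs_coord_le_norm' _ μ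
    have hbound : ∀ t : ℝ, ‖f (x0 + t • v)‖ ≤ C * (1 + |t|) ^ (-(3 + ε)) := by
      intro t
      calc ‖f (x0 + t • v)‖ ≤ C * (1 + ‖x0 + t • v‖) ^ (-3 - ε) := h1 _
      _ ≤ C * (1 + |t|) ^ (-(3 + ε)) := by
          rw [show (-3 - ε : ℝ) = -(3 + ε) by ring]
          refine mul_le_mul_of_nonneg_left ?_ hC
          exact rpow_le_rpow_of_nonpos (by positivity) (by linarith [hcμ t]) (by linarith)
    have hlim : Tendsto (fun t : ℝ => C * (1 + |t|) ^ (-(3 + ε))) atTop (𝓝 0) := by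
      have h := (tendsto_rpow_neg_atTop (by linarith : (0:ℝ) < 3 + ε)).comp
        (tendsto_atTop_add_const_left _ 1 tendsto_abs_atTop_atTop)
      simpa using h.const_mul C
    have hlimb : Tendsto (fun t : ℝ => C * (1 + |t|) ^ (-(3 + ε))) atBot (𝓝 0) := by
      have h := (tendsto_rpow_neg_atTop (by linarith : (0:ℝ) < 3 + ε)).comp
        (tendsto_atTop_add_const_left _ 1 tendsto_abs_atBot_atTop)
      simpa using h.const_mul C
    have htop : Tendsto (fun t : ℝ => f (x0 + t • v)) atTop (𝓝 0) :=
      squeeze_zero_norm hbound hlim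
    have hbot : Tendsto (fun t : ℝ => f (x0 + t • v)) atBot (𝓝 0) :=
      squeeze_zero_norm hbound hlimb
    rw [integral_of_hasDerivAt_of_tendsto hder hy hbot htop, sub_zero]
  refine integral_eq_zero_of_ae ?_
  filter_upwards [hae] with y hy
  simpa using hy

/-- Pointwise identity: by symmetry of second derivatives and antisymmetry of `θ`,
the contraction `θ^{μν} ∂_μP ∂_νQ` agrees with the total divergence `θ^{μν} ∂_μ(P ∂_νQ)`. -/
private lemma theta_pointwise' (θ : Matrix (Fin 4) (Fin 4) ℝ) (hθ : ∀ μ ν, θ μ ν = -θ ν μ)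
    (P Q : EuclideanSpace ℝ (Fin 4) → ℂ)
    (hP : ContDiff ℝ (⊤ : ℕ∞) P) (hQ : ContDiff ℝ (⊤ : ℕ∞) Q) (x : EuclideanSpace ℝ (Fin 4)) :
    ∑ μ : Fin 4, ∑ ν : Fin 4, (θ μ ν : ℂ) * pder μ P x * pder ν Q x
      = ∑ μ : Fin 4, ∑ ν : Fin 4, (θ μ ν : ℂ) * pder μ (fun y => P y * pder ν Q y) x := by
  have hQν : ∀ ν : Fin 4, ContDiff ℝ (⊤ : ℕ∞) (pder ν Q) := fun ν =>
    (hQ.fderiv_right (by simp)).clm_apply contDiff_const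
  have hmul : ∀ μ ν : Fin 4, pder μ (fun y => P y * pder ν Q y) x
      = pder μ P x * pder ν Q x + P x * pder μ (pder ν Q) x := by
    intro μ ν
    show fderiv ℝ (fun y => P y * pder ν Q y) x _ = _
    rw [fderiv_fun_mul (hP.differentiable (by simp) x) ((hQν ν).differentiable (by simp) x)]
    simp only [ContinuousLinearMap.add_apply, ContinuousLinearMap.smul_apply, smul_eq_mul]
    ring_nf
    rfl
  have hd2 : DifferentiableAt ℝ (fderiv ℝ Q) x :=
    ((hQ.fderiv_right (m := 1) (WithTop.coe_le_coe.mpr le_top)).differentiable (by simp)) x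
  have key : ∀ w v : EuclideanSpace ℝ (Fin 4),
      fderiv ℝ (fun y => fderiv ℝ Q y w) x v = fderiv ℝ (fderiv ℝ Q) x v w := by
    intro w v
    rw [fderiv_clm_apply hd2 (differentiableAt_const w)]
    simp
  have hsymm : ∀ μ ν : Fin 4, pder μ (pder ν Q) x = pder ν (pder μ Q) x := by
    intro μ ν
    show fderiv ℝ (fun y => fderiv ℝ Q y _) x _ = fderiv ℝ (fun y => fderiv ℝ Q y _) x _
    rw [key, key]
    exact (hQ.contDiffAt.isSymmSndFDerivAt (by
      rw [minSmoothness_of_isRCLikeNormedField]; exact WithTop.coe_le_coe.mpr le_top)) _ _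
  have hzero : ∑ μ : Fin 4, ∑ ν : Fin 4, (θ μ ν : ℂ) * (P x * pder μ (pder ν Q) x) = 0 := by
    set A := ∑ μ : Fin 4, ∑ ν : Fin 4, (θ μ ν : ℂ) * (P x * pder μ (pder ν Q) x) with hA
    have h : A = -A := by
      calc A = ∑ μ : Fin 4, ∑ ν : Fin 4, -((θ ν μ : ℂ) * (P x * pder ν (pder μ Q) x)) := by
            refine Finset.sum_congr rfl fun μ _ => Finset.sum_congr rfl fun ν _ => ?_
            rw [hθ μ ν, hsymm μ ν]; push_cast; ring
        _ = -∑ μ : Fin 4, ∑ ν : Fin 4, (θ ν μ : ℂ) * (P x * pder ν (pder μ Q) x) := by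
            simp
        _ = -∑ ν : Fin 4, ∑ μ : Fin 4, (θ ν μ : ℂ) * (P x * pder ν (pder μ Q) x) := by
            rw [Finset.sum_comm]
        _ = -A := rfl
    have h2 : A + A = 0 := by nth_rewrite 2 [h]; exact add_neg_cancel A
    exact add_self_eq_zero.mp h2
  calc ∑ μ : Fin 4, ∑ ν : Fin 4, (θ μ ν : ℂ) * pder μ P x * pder ν Q x
      = (∑ μ : Fin 4, ∑ ν : Fin 4, (θ μ ν : ℂ) * pder μ P x * pder ν Q x)
        + ∑ μ : Fin 4, ∑ ν : Fin 4, (θ μ ν : ℂ) * (P x * pder μ (pder ν Q) x) := by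
        rw [hzero, add_zero]
    _ = ∑ μ : Fin 4, ∑ ν : Fin 4, (θ μ ν : ℂ) * pder μ (fun y => P y * pder ν Q y) x := by
        rw [← Finset.sum_add_distrib]
        refine Finset.sum_congr rfl fun μ _ => ?_
        rw [← Finset.sum_add_distrib]
        refine Finset.sum_congr rfl fun ν _ => ?_
        rw [hmul μ ν]; ring

/-- The key vanishing result for the first-order term in `ħ` of `∫ tr P_⋆`
(equation (PQ1)): for an antisymmetric `θ` and smooth `P, Q` with
`|P ∂_νQ| ≤ C(1+‖x‖)^{-3-ε}` and `|∂_μ(P ∂_νQ)| ≤ C(1+‖x‖)^{-4-ε}`,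
the integral `∫ Σ θ^{μν} ∂_μP ∂_νQ` over `ℝ⁴` vanishes. -/
theorem integral_theta_contraction_eq_zero
    (θ : Matrix (Fin 4) (Fin 4) ℝ) (hθ : ∀ μ ν, θ μ ν = -θ ν μ)
    (P Q : EuclideanSpace ℝ (Fin 4) → ℂ)
    (hP : ContDiff ℝ (⊤ : ℕ∞) P) (hQ : ContDiff ℝ (⊤ : ℕ∞) Q)
    (C ε : ℝ) (hC : 0 < C) (hε : 0 < ε)
    (h1 : ∀ (x : EuclideanSpace ℝ (Fin 4)) (ν : Fin 4),
      ‖P x * pder ν Q x‖ ≤ C * (1 + ‖x‖) ^ (-3 - ε))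
    (h2 : ∀ (x : EuclideanSpace ℝ (Fin 4)) (μ ν : Fin 4),
      ‖pder μ (fun y => P y * pder ν Q y) x‖ ≤ C * (1 + ‖x‖) ^ (-4 - ε)) :
    ∫ x, ∑ μ : Fin 4, ∑ ν : Fin 4, (θ μ ν : ℂ) * pder μ P x * pder ν Q x = 0 := by
  have hQν : ∀ ν : Fin 4, ContDiff ℝ (⊤ : ℕ∞) (pder ν Q) := fun ν =>
    (hQ.fderiv_right (by simp)).clm_apply contDiff_const
  have hFν : ∀ ν : Fin 4, ContDiff ℝ (⊤ : ℕ∞) (fun y => P y * pder ν Q y) := fun ν =>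
    hP.mul (hQν ν)
  have hintg : ∀ μ ν : Fin 4, Integrable (pder μ (fun y => P y * pder ν Q y)) := by
    intro μ ν
    refine integrable_decay' _ (((hFν ν).continuous_fderiv (by simp)).clm_apply continuous_const)
      C (4 + ε) (by linarith) fun x => ?_
    rw [show -(4 + ε) = -4 - ε by ring]; exact h2 x μ ν
  have hpt : (fun x => ∑ μ : Fin 4, ∑ ν : Fin 4, (θ μ ν : ℂ) * pder μ P x * pder ν Q x)
      = fun x => ∑ μ : Fin 4, ∑ ν : Fin 4, (θ μ ν : ℂ) * pder μ (fun y => P y * pder ν Q y) x :=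
    funext (theta_pointwise' θ hθ P Q hP hQ)
  rw [hpt]
  rw [integral_finset_sum _
    (fun μ _ => integrable_finset_sum _ fun ν _ => (hintg μ ν).const_mul _)]
  refine Finset.sum_eq_zero fun μ _ => ?_
  rw [integral_finset_sum _ (fun ν _ => (hintg μ ν).const_mul _)]
  refine Finset.sum_eq_zero fun ν _ => ?_
  rw [integral_const_mul, integral_pder_eq_zero' μ _ (hFν ν) C ε hC.le hε
    (fun x => h1 x ν) (fun x => h2 x μ ν), mul_zero]
end

section
/- Fix integers N ≥ 1, k, and a real number θ with N - kθ ≠ 0, and set f = k/(2π(N - kθ)). Let F_{μν}, for μ,ν ∈ {1,2,3,4}, be the constant (N²×N²)-matrix-valued curvature with F_{12} = -F_{34} = -i f · 1_{N²}, F_{21} = -F_{12}, F_{43} = -F_{34}, and all other components zero (where 1_{N²} is the N²×N² identity matrix). Then the instanton number I := (1/8π²) · (1/4) · ∫_{[0,2π]⁴} Σ_{μ,ν,ρ,σ=1}^{4} ε_{μνρσ} tr(F_{μν} F_{ρσ}) dx equals k²N²/(N - kθ)². In particular, for θ = 0 (so f = k/(2πN)) the instanton number equals k². -/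
/-!
Each `F_{μν}` is the scalar `-i f ω_{μν}` times the identity, with `ω` the integer form
`ω₀₁ = -ω₂₃ = 1`. Hence the integrand is the constant `(-i f)² · N² · ∑ ε ω ω = 8 f² N²`,
the cube contributes `(2π)⁴`, and `f = k / (2π(N - kθ))` turns the result into
`k² N² / (N - kθ)²`.
-/

open MeasureTheory Real

/-- The Levi-Civita symbol on four indices, with `leviCivita 0 1 2 3 = 1`. -/
noncomputable def leviCivita (a b c d : Fin 4) : ℤ :=
  if h : Function.Bijective ![a, b, c, d] then
    (Equiv.Perm.sign (Equiv.ofBijective ![a, b, c, d] h) : ℤ)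
  else 0

/-- The constant curvature of the twisted instanton on the (noncommutative) 4-torus:
`F_{12} = -F_{34} = -i f · 1_{N²}`, `F_{21} = -F_{12}`, `F_{43} = -F_{34}`, all other
components zero. -/
noncomputable def torusCurv (N : ℕ) (f : ℝ) :
    Fin 4 → Fin 4 → Matrix (Fin (N ^ 2)) (Fin (N ^ 2)) ℂ := fun μ ν =>
  if μ = 0 ∧ ν = 1 then (-(Complex.I * (f : ℂ))) • (1 : Matrix (Fin (N ^ 2)) (Fin (N ^ 2)) ℂ)
  else if μ = 1 ∧ ν = 0 then (Complex.I * (f : ℂ)) • 1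
  else if μ = 2 ∧ ν = 3 then (Complex.I * (f : ℂ)) • 1
  else if μ = 3 ∧ ν = 2 then (-(Complex.I * (f : ℂ))) • 1
  else 0

def twistForm (μ ν : Fin 4) : ℤ :=
  if μ = 0 ∧ ν = 1 then 1
  else if μ = 1 ∧ ν = 0 then -1
  else if μ = 2 ∧ ν = 3 then -1
  else if μ = 3 ∧ ν = 2 then 1
  else 0

theorem torusCurv_eq_smul_one (N : ℕ) (f : ℝ) (μ ν : Fin 4) :
    torusCurv N f μ ν = (-(Complex.I * f) * twistForm μ ν) • 1 := by
  unfold torusCurv twistForm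
  split_ifs <;> simp

-- `∑ ε_{μνρσ} ω_{μν} ω_{ρσ} = 8 Pf ω`, and `Pf ω = ω₀₁ω₂₃ - ω₀₂ω₁₃ + ω₀₃ω₁₂ = -1`.
theorem sum_leviCivita_mul_twistForm :
    ∑ μ : Fin 4, ∑ ν : Fin 4, ∑ ρ : Fin 4, ∑ σ : Fin 4,
      leviCivita μ ν ρ σ * twistForm μ ν * twistForm ρ σ = -8 := by
  decide

theorem Matrix.trace_smul_one_mul_smul_one {n R : Type*} [Fintype n] [DecidableEq n]
    [CommRing R] (a b : R) :
    Matrix.trace ((a • 1 : Matrix n n R) * b • 1) = a * b * Fintype.card n := by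
  rw [Matrix.smul_mul, Matrix.one_mul, Matrix.trace_smul, Matrix.trace_smul, Matrix.trace_one,
    smul_eq_mul, smul_eq_mul, mul_assoc]

theorem sum_leviCivita_trace_smul_one {n R : Type*} [Fintype n] [DecidableEq n] [CommRing R]
    (c : Fin 4 → Fin 4 → R) :
    ∑ μ : Fin 4, ∑ ν : Fin 4, ∑ ρ : Fin 4, ∑ σ : Fin 4,
      (leviCivita μ ν ρ σ : R) * Matrix.trace ((c μ ν • 1 : Matrix n n R) * c ρ σ • 1)
      = (∑ μ : Fin 4, ∑ ν : Fin 4, ∑ ρ : Fin 4, ∑ σ : Fin 4,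
          (leviCivita μ ν ρ σ : R) * c μ ν * c ρ σ) * Fintype.card n := by
  simp only [Matrix.trace_smul_one_mul_smul_one, Finset.sum_mul, mul_assoc]

theorem sum_leviCivita_trace_torusCurv (N : ℕ) (f : ℝ) :
    ∑ μ : Fin 4, ∑ ν : Fin 4, ∑ ρ : Fin 4, ∑ σ : Fin 4,
      (leviCivita μ ν ρ σ : ℂ) * Matrix.trace (torusCurv N f μ ν * torusCurv N f ρ σ)
      = 8 * f ^ 2 * N ^ 2 := by
  have hω : ∑ μ : Fin 4, ∑ ν : Fin 4, ∑ ρ : Fin 4, ∑ σ : Fin 4,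
      (leviCivita μ ν ρ σ : ℂ) * twistForm μ ν * twistForm ρ σ = -8 := by
    exact_mod_cast sum_leviCivita_mul_twistForm
  have hpull (a b c x : ℂ) : a * (x * b) * (x * c) = a * b * c * x ^ 2 := by ring
  simp only [torusCurv_eq_smul_one, sum_leviCivita_trace_smul_one, hpull, ← Finset.sum_mul, hω,
    Fintype.card_fin]
  rw [neg_sq, mul_pow, Complex.I_sq]
  push_cast
  ring

theorem EuclideanSpace.volume_real_preimage_ofLp_pi_Icc {ι : Type*} [Fintype ι]
    {a b : ι → ℝ} (hab : a ≤ b) :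
    volume.real (WithLp.ofLp ⁻¹' Set.univ.pi (fun i => Set.Icc (a i) (b i)) :
      Set (EuclideanSpace ℝ ι)) = ∏ i, (b i - a i) := by
  rw [measureReal_def, (PiLp.volume_preserving_ofLp ι).measure_preimage
    (MeasurableSet.univ_pi fun _ => measurableSet_Icc).nullMeasurableSet, Set.pi_univ_Icc,
    Real.volume_Icc_pi_toReal hab]

theorem torus_instanton_number_general (N : ℕ) (k : ℤ) (θ : ℝ)
    (h : (N : ℝ) - k * θ ≠ 0) (f : ℝ) (hf : f = k / (2 * π * ((N : ℝ) - k * θ))) :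
    (((8 * π ^ 2 : ℝ) : ℂ))⁻¹ * (1 / 4) *
      ∫ x in (WithLp.ofLp ⁻¹' (Set.univ.pi fun _ : Fin 4 => Set.Icc (0 : ℝ) (2 * π)) :
          Set (EuclideanSpace ℝ (Fin 4))),
        ∑ μ : Fin 4, ∑ ν : Fin 4, ∑ ρ : Fin 4, ∑ σ : Fin 4,
          (leviCivita μ ν ρ σ : ℂ) *
            Matrix.trace (torusCurv N f μ ν * torusCurv N f ρ σ)
      = (((k : ℝ) ^ 2 * (N : ℝ) ^ 2 / ((N : ℝ) - k * θ) ^ 2 : ℝ) : ℂ) := by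
  have hvol := EuclideanSpace.volume_real_preimage_ofLp_pi_Icc (ι := Fin 4)
    (a := fun _ => 0) (b := fun _ => 2 * π) fun _ => by positivity
  have hreal : (8 * π ^ 2)⁻¹ * (1 / 4) * ((2 * π) ^ 4 * (8 * f ^ 2 * N ^ 2))
      = (k : ℝ) ^ 2 * N ^ 2 / (N - k * θ) ^ 2 := by
    rw [hf]
    field_simp
    ring
  rw [setIntegral_const, sum_leviCivita_trace_torusCurv, hvol, ← hreal]
  simp only [sub_zero, Finset.prod_const, Finset.card_univ, Fintype.card_fin, Complex.real_smul]
  push_cast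
  ring

/-- The computation of Section 6 of the paper: the constant-curvature twisted instanton
on the noncommutative 4-torus, with `f = k/(2π(N - kθ))` forced by the twisted boundary
conditions, has instanton number
`(1/8π²)·(1/4)·∫_{[0,2π]⁴} Σ ε_{μνρσ} tr(F_{μν}F_{ρσ}) = k²N²/(N - kθ)²`,
so the instanton number on the torus is deformed by the noncommutative parameter `θ`. -/
theorem torus_instanton_number (N : ℕ) (hN : 1 ≤ N) (k : ℤ) (θ : ℝ)
    (h : (N : ℝ) - k * θ ≠ 0) (f : ℝ) (hf : f = k / (2 * π * ((N : ℝ) - k * θ))) :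
    (((8 * π ^ 2 : ℝ) : ℂ))⁻¹ * (1 / 4) *
      ∫ x in (WithLp.ofLp ⁻¹' (Set.univ.pi fun _ : Fin 4 => Set.Icc (0 : ℝ) (2 * π)) :
          Set (EuclideanSpace ℝ (Fin 4))),
        ∑ μ : Fin 4, ∑ ν : Fin 4, ∑ ρ : Fin 4, ∑ σ : Fin 4,
          (leviCivita μ ν ρ σ : ℂ) *
            Matrix.trace (torusCurv N f μ ν * torusCurv N f ρ σ)
      = (((k : ℝ) ^ 2 * (N : ℝ) ^ 2 / ((N : ℝ) - k * θ) ^ 2 : ℝ) : ℂ) :=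
  torus_instanton_number_general N k θ h f hf
end
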